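/- arXiv:2103.17024 — 2 statements merged into one kernel-verified Lean document; each statement's English description precedes it below -/
import Mathlib

section
/- Preservation of intuitionistic formulas between a model and its unravelling: for a pointed Kripke Θ-model (M, w), every sequence w̄_n ∈ W^{un(w)}, every m ≥ 0 and ā_m ∈ A^m_{w_n}, and every intuitionistic formula φ with free variables among x_1,...,x_m: M, w_n ⊨ φ[ā_m] if and only if M^{un(w)}, w̄_n ⊨ φ[ā_m ⊙ w̄_n], where ā_m ⊙ w̄_n denotes the tuple ((a_1; w̄_n),...,(a_m; w̄_n)). (Equivalently, the complete IL-types coincide.) -/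
set_option linter.unusedVariables false

universe u

/-- A first-order signature: predicate symbols with arities, and constant symbols. -/
structure Sig : Type (u + 1) where
  Pred : Type u
  arity : Pred → ℕ
  Const : Type u

/-- A first-order Kripke `S`-model with ambient type `W` of worlds and `D` of objects. -/
structure KModel (S : Sig.{u}) (W : Type*) (D : Type*) where
  worlds : Set W
  rel : W → W → Prop
  rel_mem : ∀ {a b}, rel a b → a ∈ worlds ∧ b ∈ worlds
  rel_refl : ∀ {a}, a ∈ worlds → rel a a
  rel_trans : ∀ {a b c}, rel a b → rel b c → rel a c
  rel_antisymm : ∀ {a b}, rel a b → rel b a → a = b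
  dom : W → Set D
  dom_disjoint : ∀ {a b}, a ∈ worlds → b ∈ worlds → a ≠ b → Disjoint (dom a) (dom b)
  interpP : (w : W) → (P : S.Pred) → Set (Fin (S.arity P) → D)
  interpC : W → S.Const → D
  interpC_mem : ∀ {a}, a ∈ worlds → ∀ c, interpC a c ∈ dom a
  H : W → W → D → D
  H_mem : ∀ {a b}, rel a b → ∀ {x}, x ∈ dom a → H a b x ∈ dom b
  H_id : ∀ {a}, a ∈ worlds → ∀ {x}, x ∈ dom a → H a a x = x
  H_comp : ∀ {a b c}, rel a b → rel b c → ∀ {x}, x ∈ dom a → H a c x = H b c (H a b x)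
  H_pred : ∀ {a b}, rel a b → ∀ {P : S.Pred} {t : Fin (S.arity P) → D}, t ∈ interpP a P →
    (∀ i, t i ∈ dom a) → (fun i => H a b (t i)) ∈ interpP b P
  H_const : ∀ {a b}, rel a b → ∀ c, H a b (interpC a c) = interpC b c

variable {S T : Sig} {W D : Type*}

/-- The total domain `⋃_{w ∈ W} A_w` of a Kripke model. -/
def totalDom (M : KModel S W D) : Set D := ⋃ w ∈ M.worlds, M.dom w

/-- `M` is a submodel of `N`. -/
def Submodel (M N : KModel S W D) : Prop :=
  M.worlds ⊆ N.worlds ∧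
  (∀ a b, M.rel a b ↔ N.rel a b ∧ a ∈ M.worlds ∧ b ∈ M.worlds) ∧
  (∀ w ∈ M.worlds, M.dom w ⊆ N.dom w) ∧
  (∀ w ∈ M.worlds, ∀ (P : S.Pred) (t : Fin (S.arity P) → D),
      (∀ i, t i ∈ M.dom w) → (t ∈ M.interpP w P ↔ t ∈ N.interpP w P)) ∧
  (∀ w ∈ M.worlds, ∀ c, M.interpC w c = N.interpC w c) ∧
  (∀ a b, M.rel a b → ∀ x ∈ M.dom a, M.H a b x = N.H a b x)

/-- Extensional equality of Kripke models (agreement on all meaningful components). -/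
def MEq (M N : KModel S W D) : Prop :=
  M.worlds = N.worlds ∧
  (∀ a b, M.rel a b ↔ N.rel a b) ∧
  (∀ w ∈ M.worlds, M.dom w = N.dom w) ∧
  (∀ w ∈ M.worlds, ∀ (P : S.Pred) (t : Fin (S.arity P) → D),
      (∀ i, t i ∈ M.dom w) → (t ∈ M.interpP w P ↔ t ∈ N.interpP w P)) ∧
  (∀ w ∈ M.worlds, ∀ c, M.interpC w c = N.interpC w c) ∧
  (∀ a b, M.rel a b → ∀ x ∈ M.dom a, M.H a b x = N.H a b x)

/-- Terms of the language: variables (de Bruijn, among `n` free variables) and constants. -/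
inductive Term (S : Sig.{u}) (n : ℕ) : Type u where
  | var : Fin n → Term S n
  | const : S.Const → Term S n

/-- Intuitionistic first-order formulas (without equality) with free variables among `Fin n`. -/
inductive Fml (S : Sig.{u}) : ℕ → Type u where
  | atom {n} (P : S.Pred) (ts : Fin (S.arity P) → Term S n) : Fml S n
  | bot {n} : Fml S n
  | and {n} : Fml S n → Fml S n → Fml S n
  | or {n} : Fml S n → Fml S n → Fml S n
  | imp {n} : Fml S n → Fml S n → Fml S n
  | all {n} : Fml S (n + 1) → Fml S n
  | ex {n} : Fml S (n + 1) → Fml S n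

/-- Evaluation of a term at a world under an assignment. -/
def Term.eval (M : KModel S W D) (w : W) {n : ℕ} (ρ : Fin n → D) : Term S n → D
  | .var i => ρ i
  | .const c => M.interpC w c

/-- Kripke satisfaction for intuitionistic first-order logic. -/
def Sat (M : KModel S W D) : ∀ {n : ℕ}, W → Fml S n → (Fin n → D) → Prop
  | _, w, .atom P ts, ρ => (fun i => Term.eval M w ρ (ts i)) ∈ M.interpP w P
  | _, _, .bot, _ => False
  | _, w, .and φ ψ, ρ => Sat M w φ ρ ∧ Sat M w ψ ρ
  | _, w, .or φ ψ, ρ => Sat M w φ ρ ∨ Sat M w ψ ρ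
  | _, w, .imp φ ψ, ρ => ∀ v, M.rel w v →
      (Sat M v φ (fun i => M.H w v (ρ i)) → Sat M v ψ (fun i => M.H w v (ρ i)))
  | _, w, .all φ, ρ => ∀ v, M.rel w v → ∀ a ∈ M.dom v,
      Sat M v φ (Fin.snoc (fun i => M.H w v (ρ i)) a)
  | _, w, .ex φ, ρ => ∃ a ∈ M.dom w, Sat M w φ (Fin.snoc ρ a)

/-- The positive complete type of a tuple at a world. -/
def TpPos (M : KModel S W D) (w : W) {n : ℕ} (a : Fin n → D) : Set (Fml S n) :=
  {φ | Sat M w φ a}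

/-- The complete type: the pair of the sets of formulas true resp. false of the tuple. -/
def Tp (M : KModel S W D) (w : W) {n : ℕ} (a : Fin n → D) :
    Set (Fml S n) × Set (Fml S n) :=
  ({φ | Sat M w φ a}, {φ | ¬ Sat M w φ a})

/-- `M` is an IL-elementary submodel of `N`. -/
def ElemSub (M N : KModel S W D) : Prop :=
  Submodel M N ∧
  ∀ w ∈ M.worlds, ∀ (n : ℕ) (a : Fin n → D), (∀ i, a i ∈ M.dom w) → Tp M w a = Tp N w a
/-- The submodel of `M` generated by the upward cone of `w`. -/
def genSub (M : KModel S W D) (w : W) : KModel S W D where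
  worlds := {v | M.rel w v}
  rel a b := M.rel w a ∧ M.rel a b
  rel_mem := fun {a b} h => ⟨h.1, M.rel_trans h.1 h.2⟩
  rel_refl := fun {a} ha => ⟨ha, M.rel_refl (M.rel_mem ha).2⟩
  rel_trans := fun {a b c} h h' => ⟨h.1, M.rel_trans h.2 h'.2⟩
  rel_antisymm := fun {a b} h h' => M.rel_antisymm h.2 h'.2
  dom := M.dom
  dom_disjoint := fun {a b} ha hb hne => M.dom_disjoint (M.rel_mem ha).2 (M.rel_mem hb).2 hne
  interpP := M.interpP
  interpC := M.interpC
  interpC_mem := fun {a} ha c => M.interpC_mem (M.rel_mem ha).2 c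
  H := M.H
  H_mem := fun {a b} h {x} hx => M.H_mem h.2 hx
  H_id := fun {a} ha {x} hx => M.H_id (M.rel_mem ha).2 hx
  H_comp := fun {a b c} h h' {x} hx => M.H_comp h.2 h'.2 hx
  H_pred := fun {a b} h {P t} ht hdom => M.H_pred h.2 ht hdom
  H_const := fun {a b} h c => M.H_const h.2 c

/-- Extension of a signature by `n` fresh pairwise distinct constants. -/
def Sig.addConsts (S : Sig.{u}) (n : ℕ) : Sig.{u} where
  Pred := S.Pred
  arity := S.arity
  Const := S.Const ⊕ Fin n

/-- A morphism of signatures (arity preserving). -/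
structure SigHom (S T : Sig) where
  predMap : S.Pred → T.Pred
  constMap : S.Const → T.Const
  arity_eq : ∀ P, T.arity (predMap P) = S.arity P

/-- The inclusion of a signature into its extension by fresh constants. -/
def Sig.incConsts (S : Sig) (n : ℕ) : SigHom S (S.addConsts n) :=
  ⟨id, Sum.inl, fun _ => rfl⟩

/-- Reduct of a model along a signature morphism. -/
def reductHom (r : SigHom S T) (M : KModel T W D) : KModel S W D where
  worlds := M.worlds
  rel := M.rel
  rel_mem := M.rel_mem
  rel_refl := M.rel_refl
  rel_trans := M.rel_trans
  rel_antisymm := M.rel_antisymm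
  dom := M.dom
  dom_disjoint := M.dom_disjoint
  interpP w P := {t | (fun i => t (Fin.cast (r.arity_eq P) i)) ∈ M.interpP w (r.predMap P)}
  interpC w c := M.interpC w (r.constMap c)
  interpC_mem := fun {a} ha c => M.interpC_mem ha _
  H := M.H
  H_mem := M.H_mem
  H_id := M.H_id
  H_comp := M.H_comp
  H_pred := fun {a b} h {P t} ht hdom => M.H_pred h ht (fun i => hdom _)
  H_const := fun {a b} h c => M.H_const h _

/-- The canonical expansion `([M,w], c̄/ā)` of the generated submodel `[M,w]` by fresh
constants denoting `ā` at `w`. -/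
def constExt (M : KModel S W D) (w : W) {n : ℕ} (a : Fin n → D)
    (hw : w ∈ M.worlds) (ha : ∀ i, a i ∈ M.dom w) : KModel (S.addConsts n) W D where
  worlds := {v | M.rel w v}
  rel a b := M.rel w a ∧ M.rel a b
  rel_mem := fun {a b} h => ⟨h.1, M.rel_trans h.1 h.2⟩
  rel_refl := fun {a} ha => ⟨ha, M.rel_refl (M.rel_mem ha).2⟩
  rel_trans := fun {a b c} h h' => ⟨h.1, M.rel_trans h.2 h'.2⟩
  rel_antisymm := fun {a b} h h' => M.rel_antisymm h.2 h'.2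
  dom := M.dom
  dom_disjoint := fun {a b} ha hb hne => M.dom_disjoint (M.rel_mem ha).2 (M.rel_mem hb).2 hne
  interpP := M.interpP
  interpC v c := Sum.elim (M.interpC v) (fun i => M.H w v (a i)) c
  interpC_mem := fun {v} hv c => by
    cases c with
    | inl c => exact M.interpC_mem (M.rel_mem hv).2 c
    | inr i => exact M.H_mem hv (ha i)
  H := M.H
  H_mem := fun {a b} h {x} hx => M.H_mem h.2 hx
  H_id := fun {a} ha {x} hx => M.H_id (M.rel_mem ha).2 hx
  H_comp := fun {a b c} h h' {x} hx => M.H_comp h.2 h'.2 hx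
  H_pred := fun {a b} h {P t} ht hdom => M.H_pred h.2 ht hdom
  H_const := fun {u v} h c => by
    cases c with
    | inl c => exact M.H_const h.2 c
    | inr i => exact (M.H_comp h.1 h.2 (ha i)).symm

/-- Translation of terms along a signature morphism. -/
def mapTerm (r : SigHom S T) {n : ℕ} : Term S n → Term T n
  | .var i => .var i
  | .const c => .const (r.constMap c)

/-- Translation of formulas along a signature morphism. -/
def mapFml (r : SigHom S T) : ∀ {n : ℕ}, Fml S n → Fml T n
  | _, .atom P ts => .atom (r.predMap P) (fun i => mapTerm r (ts (Fin.cast (r.arity_eq P) i)))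
  | _, .bot => .bot
  | _, .and φ ψ => .and (mapFml r φ) (mapFml r ψ)
  | _, .or φ ψ => .or (mapFml r φ) (mapFml r ψ)
  | _, .imp φ ψ => .imp (mapFml r φ) (mapFml r ψ)
  | _, .all φ => .all (mapFml r φ)
  | _, .ex φ => .ex (mapFml r φ)

/-- The canonical identification of `Θ ∪ {c̄_{n+1}}` with `(Θ ∪ {c̄_n}) ∪ {c_{n+1}}`. -/
def flattenHom (S : Sig) (n : ℕ) : SigHom (S.addConsts (n + 1)) ((S.addConsts n).addConsts 1) where
  predMap := id
  constMap := fun c =>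
    match c with
    | .inl c => .inl (.inl c)
    | .inr i => if h : (i : ℕ) < n then .inl (.inr ⟨i, h⟩) else .inr 0
  arity_eq := fun _ => rfl

section Hetero

variable {W₁ D₁ W₂ D₂ : Type*}

/-- `(g,h)` is an isomorphism from `M` onto `N`. -/
def IsIso (M : KModel S W₁ D₁) (N : KModel S W₂ D₂) (g : D₁ → D₂) (h : W₁ → W₂) : Prop :=
  Set.BijOn h M.worlds N.worlds ∧
  Set.BijOn g (totalDom M) (totalDom N) ∧
  (∀ a b, a ∈ M.worlds → b ∈ M.worlds → (M.rel a b ↔ N.rel (h a) (h b))) ∧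
  (∀ w ∈ M.worlds, Set.BijOn g (M.dom w) (N.dom (h w))) ∧
  (∀ w ∈ M.worlds, ∀ (P : S.Pred) (t : Fin (S.arity P) → D₁), (∀ i, t i ∈ M.dom w) →
      (t ∈ M.interpP w P ↔ (fun i => g (t i)) ∈ N.interpP (h w) P)) ∧
  (∀ w ∈ M.worlds, ∀ c, g (M.interpC w c) = N.interpC (h w) c) ∧
  (∀ a b, M.rel a b → ∀ x ∈ M.dom a, g (M.H a b x) = N.H (h a) (h b) (g x))

/-- `(g,h)` is an IL-elementary embedding of `M` into `N`. -/
def IsElemEmbed (M : KModel S W₁ D₁) (N : KModel S W₂ D₂) (g : D₁ → D₂) (h : W₁ → W₂) : Prop :=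
  Set.InjOn h M.worlds ∧
  Set.InjOn g (totalDom M) ∧
  (∀ a b, a ∈ M.worlds → b ∈ M.worlds → (M.rel a b ↔ N.rel (h a) (h b))) ∧
  (∀ w ∈ M.worlds, Set.MapsTo g (M.dom w) (N.dom (h w))) ∧
  (∀ a b, M.rel a b → ∀ x ∈ M.dom a, g (M.H a b x) = N.H (h a) (h b) (g x)) ∧
  (∀ w ∈ M.worlds, ∀ (n : ℕ) (a : Fin n → D₁), (∀ i, a i ∈ M.dom w) →
      Tp M w a = Tp N (h w) (fun i => g (a i)))

/-- The conditions (atom), (s-back), (obj-forth), (obj-back) of an IL-asimulation, for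
the direction from `M₁` to `M₂`, with partner family `G` for the converse direction. -/
def AsimDir (M₁ : KModel S W₁ D₁) (M₂ : KModel S W₂ D₂)
    (F : ∀ k : ℕ, W₁ → (Fin k → D₁) → W₂ → (Fin k → D₂) → Prop)
    (G : ∀ k : ℕ, W₂ → (Fin k → D₂) → W₁ → (Fin k → D₁) → Prop) : Prop :=
  ∀ (k : ℕ) (w : W₁) (α : Fin k → D₁) (v : W₂) (β : Fin k → D₂),
    F k w α v β → (∀ i, α i ∈ M₁.dom w) → (∀ i, β i ∈ M₂.dom v) →
    ((∀ (P : S.Pred) (ts : Fin (S.arity P) → Term S k),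
        Sat M₁ w (.atom P ts) α → Sat M₂ v (.atom P ts) β) ∧
     (∀ t, M₂.rel v t → ∃ u, M₁.rel w u ∧
        F k u (fun i => M₁.H w u (α i)) t (fun i => M₂.H v t (β i)) ∧
        G k t (fun i => M₂.H v t (β i)) u (fun i => M₁.H w u (α i))) ∧
     (∀ α' ∈ M₁.dom w, ∃ β' ∈ M₂.dom v,
        F (k + 1) w (Fin.snoc α α') v (Fin.snoc β β')) ∧
     (∀ t, M₂.rel v t → ∀ β' ∈ M₂.dom t, ∃ u, M₁.rel w u ∧ ∃ α' ∈ M₁.dom u,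
        F (k + 1) u (Fin.snoc (fun i => M₁.H w u (α i)) α')
          t (Fin.snoc (fun i => M₂.H v t (β i)) β')))

/-- `(F, G)` is an IL-asimulation (in both directions) between `M₁` and `M₂`. -/
def IsAsim (M₁ : KModel S W₁ D₁) (M₂ : KModel S W₂ D₂)
    (F : ∀ k : ℕ, W₁ → (Fin k → D₁) → W₂ → (Fin k → D₂) → Prop)
    (G : ∀ k : ℕ, W₂ → (Fin k → D₂) → W₁ → (Fin k → D₁) → Prop) : Prop :=
  AsimDir M₁ M₂ F G ∧ AsimDir M₂ M₁ G F

/-- `(F, G)` is an IL-asimulation from `(M₁, w₁, ā)` to `(M₂, w₂, b̄)`. -/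
def AsimFrom (M₁ : KModel S W₁ D₁) (w₁ : W₁) {n : ℕ} (a : Fin n → D₁)
    (M₂ : KModel S W₂ D₂) (w₂ : W₂) (b : Fin n → D₂)
    (F : ∀ k : ℕ, W₁ → (Fin k → D₁) → W₂ → (Fin k → D₂) → Prop)
    (G : ∀ k : ℕ, W₂ → (Fin k → D₂) → W₁ → (Fin k → D₁) → Prop) : Prop :=
  IsAsim M₁ M₂ F G ∧ F n w₁ a w₂ b

end Hetero

/-- `E` is a congruence on the Kripke model `M`. -/
def IsCong (M : KModel S W D) (E : W → D → D → Prop) : Prop :=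
  (∀ w ∈ M.worlds, ∀ a ∈ M.dom w, E w a a) ∧
  (∀ w ∈ M.worlds, ∀ a b, E w a b → E w b a) ∧
  (∀ w ∈ M.worlds, ∀ a b c, E w a b → E w b c → E w a c) ∧
  (∀ w ∈ M.worlds, ∀ a b, E w a b → a ∈ M.dom w ∧ b ∈ M.dom w) ∧
  (∀ a b, M.rel a b → ∀ x y, E a x y → E b (M.H a b x) (M.H a b y)) ∧
  (∀ w ∈ M.worlds, ∀ (P : S.Pred) (t t' : Fin (S.arity P) → D),
      (∀ i, E w (t i) (t' i)) → (t ∈ M.interpP w P ↔ t' ∈ M.interpP w P))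

/-- `Q` is the quotient of `M` by the congruence `E`: same worlds and order, domains of
equivalence classes, induced interpretations and homomorphisms. -/
def IsQuotient (M : KModel S W D) (E : W → D → D → Prop) (Q : KModel S W (Set D)) : Prop :=
  Q.worlds = M.worlds ∧
  (∀ a b, Q.rel a b ↔ M.rel a b) ∧
  (∀ w ∈ M.worlds, Q.dom w = {s | ∃ a ∈ M.dom w, s = {b | E w a b}}) ∧
  (∀ w ∈ M.worlds, ∀ (P : S.Pred) (T : Fin (S.arity P) → Set D), (∀ i, T i ∈ Q.dom w) →
      (T ∈ Q.interpP w P ↔ ∃ t ∈ M.interpP w P, ∀ i, T i = {b | E w (t i) b})) ∧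
  (∀ w ∈ M.worlds, ∀ c, Q.interpC w c = {b | E w (M.interpC w c) b}) ∧
  (∀ a b, M.rel a b → ∀ x ∈ M.dom a, Q.H a b {y | E a x y} = {y | E b (M.H a b x) y})

section Unravel

/-- The worlds of the unravelling of `(M, w)`: finite `≺`-increasing sequences starting at `w`. -/
def unChains (M : KModel S W D) (w : W) : Set (List W) :=
  {l | l ≠ [] ∧ l.head? = some w ∧ l.Chain' M.rel}

/-- The one-step extension relation on chains. -/
def unStep (M : KModel S W D) (w : W) (s t : List W) : Prop :=
  s ∈ unChains M w ∧ t ∈ unChains M w ∧ ∃ u, t = s ++ [u]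

/-- The accessibility relation of the unravelling: the reflexive-transitive closure of the
one-step extension relation, restricted to chains. -/
def unRel (M : KModel S W D) (w : W) (s t : List W) : Prop :=
  s ∈ unChains M w ∧ t ∈ unChains M w ∧ Relation.ReflTransGen (unStep M w) s t

/-- `U` is the intuitionistic unravelling of `(M, w)`. -/
def IsUnravelling (M : KModel S W D) (w : W) (U : KModel S (List W) (D × List W)) : Prop :=
  U.worlds = unChains M w ∧
  (∀ s t, U.rel s t ↔ unRel M w s t) ∧
  (∀ l ∈ unChains M w, U.dom l = {p | p.2 = l ∧ p.1 ∈ M.dom (l.getLastD w)}) ∧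
  (∀ l ∈ unChains M w, ∀ (P : S.Pred) (t : Fin (S.arity P) → D × List W),
      (t ∈ U.interpP l P ↔ ∃ t₀ ∈ M.interpP (l.getLastD w) P, ∀ i, t i = (t₀ i, l))) ∧
  (∀ l ∈ unChains M w, ∀ c, U.interpC l c = (M.interpC (l.getLastD w) c, l)) ∧
  (∀ s t, unRel M w s t → ∀ x ∈ M.dom (s.getLastD w),
      U.H s t (x, s) = (M.H (s.getLastD w) (t.getLastD w) x, t))

end Unravel

/-- `(Γ, Δ)` is a successor IL-type of `(M, w, ā)`. -/
def SuccType (M : KModel S W D) (w : W) {n : ℕ} (a : Fin n → D) (Γ Δ : Set (Fml S n)) : Prop :=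
  ∀ Γ' Δ' : Set (Fml S n), Γ' ⊆ Γ → Δ' ⊆ Δ → Γ'.Finite → Δ'.Finite →
    ∃ v, M.rel w v ∧ (∀ φ ∈ Γ', Sat M v φ (fun i => M.H w v (a i))) ∧
      (∀ φ ∈ Δ', ¬ Sat M v φ (fun i => M.H w v (a i)))

/-- `Ξ` is an existential IL-type of `(M, w, ā)`. -/
def ExType (M : KModel S W D) (w : W) {n : ℕ} (a : Fin n → D) (Ξ : Set (Fml S (n + 1))) : Prop :=
  ∀ Ξ' : Set (Fml S (n + 1)), Ξ' ⊆ Ξ → Ξ'.Finite →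
    ∃ b ∈ M.dom w, ∀ φ ∈ Ξ', Sat M w φ (Fin.snoc a b)

/-- `Ξ` is a universal IL-type of `(M, w, ā)`. -/
def UnivType (M : KModel S W D) (w : W) {n : ℕ} (a : Fin n → D) (Ξ : Set (Fml S (n + 1))) : Prop :=
  ∀ Ξ' : Set (Fml S (n + 1)), Ξ' ⊆ Ξ → Ξ'.Finite →
    ∃ v, M.rel w v ∧ ∃ b ∈ M.dom v, ∀ φ ∈ Ξ', ¬ Sat M v φ (Fin.snoc (fun i => M.H w v (a i)) b)

/-- A model is IL-saturated iff it realizes all of its IL-types. -/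
def Saturated (M : KModel S W D) : Prop :=
  ∀ w ∈ M.worlds, ∀ (n : ℕ) (a : Fin n → D), (∀ i, a i ∈ M.dom w) →
    (∀ Γ Δ : Set (Fml S n), SuccType M w a Γ Δ →
       ∃ v, M.rel w v ∧ (∀ φ ∈ Γ, Sat M v φ (fun i => M.H w v (a i))) ∧
         (∀ φ ∈ Δ, ¬ Sat M v φ (fun i => M.H w v (a i)))) ∧
    (∀ Ξ : Set (Fml S (n + 1)), ExType M w a Ξ →
       ∃ b ∈ M.dom w, ∀ φ ∈ Ξ, Sat M w φ (Fin.snoc a b)) ∧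
    (∀ Ξ : Set (Fml S (n + 1)), UnivType M w a Ξ →
       ∃ v, M.rel w v ∧ ∃ b ∈ M.dom v, ∀ φ ∈ Ξ, ¬ Sat M v φ (Fin.snoc (fun i => M.H w v (a i)) b))

/-- `U` is the componentwise union of the countable chain `Ms`. -/
def IsChainUnion (Ms : ℕ → KModel S W D) (U : KModel S W D) : Prop :=
  U.worlds = ⋃ k, (Ms k).worlds ∧
  (∀ a b, U.rel a b ↔ ∃ k, (Ms k).rel a b) ∧
  (∀ w ∈ U.worlds, U.dom w = {x | ∃ k, w ∈ (Ms k).worlds ∧ x ∈ (Ms k).dom w}) ∧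
  (∀ w ∈ U.worlds, ∀ (P : S.Pred) (t : Fin (S.arity P) → D), (∀ i, t i ∈ U.dom w) →
      (t ∈ U.interpP w P ↔ ∃ k, w ∈ (Ms k).worlds ∧ (∀ i, t i ∈ (Ms k).dom w) ∧
        t ∈ (Ms k).interpP w P)) ∧
  (∀ w, ∀ k, w ∈ (Ms k).worlds → ∀ c, U.interpC w c = (Ms k).interpC w c) ∧
  (∀ a b, ∀ k, (Ms k).rel a b → ∀ x ∈ (Ms k).dom a, U.H a b x = (Ms k).H a b x)

/-- `(N, w)` is an `(f,g)`-renaming of `(M, w)` along the signature renaming `r`. -/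
def IsRenamedModel (r : SigHom S T) (M : KModel S W D) (N : KModel T W D) : Prop :=
  N.worlds = M.worlds ∧
  (∀ a b, N.rel a b ↔ M.rel a b) ∧
  (∀ w ∈ M.worlds, N.dom w = M.dom w) ∧
  (∀ w ∈ M.worlds, ∀ (P : S.Pred) (t : Fin (S.arity P) → D),
      ((fun i => t (Fin.cast (r.arity_eq P) i)) ∈ N.interpP w (r.predMap P) ↔ t ∈ M.interpP w P)) ∧
  (∀ w ∈ M.worlds, ∀ c, N.interpC w (r.constMap c) = M.interpC w c) ∧
  (∀ a b, M.rel a b → ∀ x ∈ M.dom a, N.H a b x = M.H a b x)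

/-- Membership of `N` in the set `(M,w) ⊕ (c̄/ā)` of possible constant extensions:
`[M,w] ⊆ N↾Θ ⊆ M` and the fresh constants denote `ā` at `w`. -/
def InOplus (M : KModel S W D) (w : W) {n : ℕ} (a : Fin n → D)
    (N : KModel (S.addConsts n) W D) : Prop :=
  Submodel (genSub M w) (reductHom (S.incConsts n) N) ∧
  Submodel (reductHom (S.incConsts n) N) M ∧
  (∀ i, N.interpC w (Sum.inr i) = a i)

/-!
Sending a chain `l` to its last world and a tagged object `(a, l)` to `a` is a bounded morphism
from the unravelling onto `M`: it preserves `≺`, every `≺`-successor `v` of the last world of `l`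
is the image of the one-step extension `l ++ [v]`, and it maps each domain onto the corresponding
domain of `M`, commuting with predicates, constants and transition maps. Intuitionistic satisfaction is invariant under
bounded morphisms by induction on formulas; preservation of `≺` and the back condition give the
two directions of the `⇒` and `∀` clauses.
-/

lemma Fin.forall_snoc_mem {α : Type*} {X : Set α} {n : ℕ} {q : Fin n → α} {y : α}
    (hq : ∀ i, q i ∈ X) (hy : y ∈ X) : ∀ i, (Fin.snoc q y : Fin (n + 1) → α) i ∈ X :=
  Fin.forall_fin_succ'.mpr ⟨by simpa using hq, by simpa using hy⟩

namespace KModel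

variable {S : Sig} {W D W' D' : Type*}

lemma rel_of_reflTransGen (M : KModel S W D) {x y : W} (hx : x ∈ M.worlds)
    (h : Relation.ReflTransGen M.rel x y) : M.rel x y := by
  induction h with
  | refl => exact M.rel_refl hx
  | tail _ hyz ih => exact M.rel_trans ih hyz

structure IsBoundedMorphism (N : KModel S W' D') (M : KModel S W D) (f : W' → W) (g : D' → D) :
    Prop where
  rel_map : ∀ {s t}, N.rel s t → M.rel (f s) (f t)
  exists_rel : ∀ {s v}, s ∈ N.worlds → M.rel (f s) v → ∃ t, N.rel s t ∧ f t = v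
  mapsTo_dom : ∀ {s}, s ∈ N.worlds → Set.MapsTo g (N.dom s) (M.dom (f s))
  surjOn_dom : ∀ {s}, s ∈ N.worlds → Set.SurjOn g (N.dom s) (M.dom (f s))
  interpP_iff : ∀ {s}, s ∈ N.worlds → ∀ (P : S.Pred) (t : Fin (S.arity P) → D'),
    (∀ i, t i ∈ N.dom s) → (g ∘ t ∈ M.interpP (f s) P ↔ t ∈ N.interpP s P)
  map_interpC : ∀ {s}, s ∈ N.worlds → ∀ c, g (N.interpC s c) = M.interpC (f s) c
  map_H : ∀ {s t}, N.rel s t → ∀ {x}, x ∈ N.dom s → g (N.H s t x) = M.H (f s) (f t) (g x)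

namespace IsBoundedMorphism

variable {N : KModel S W' D'} {M : KModel S W D} {f : W' → W} {g : D' → D}

lemma map_eval (hπ : IsBoundedMorphism N M f g) {s : W'} (hs : s ∈ N.worlds) {n : ℕ}
    (ρ : Fin n → D') (τ : Term S n) : g (τ.eval N s ρ) = τ.eval M (f s) (g ∘ ρ) := by
  cases τ with
  | var i => rfl
  | const c => exact hπ.map_interpC hs c

lemma map_H_comp (hπ : IsBoundedMorphism N M f g) {s t : W'} (hst : N.rel s t) {n : ℕ}
    {ρ : Fin n → D'} (hρ : ∀ i, ρ i ∈ N.dom s) :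
    g ∘ (fun i => N.H s t (ρ i)) = fun i => M.H (f s) (f t) (g (ρ i)) :=
  funext fun i => hπ.map_H hst (hρ i)

theorem sat_iff (hπ : IsBoundedMorphism N M f g) {n : ℕ} (φ : Fml S n) :
    ∀ {s : W'} {ρ : Fin n → D'}, s ∈ N.worlds → (∀ i, ρ i ∈ N.dom s) →
      (Sat M (f s) φ (g ∘ ρ) ↔ Sat N s φ ρ) := by
  induction φ with
  | atom P ts =>
    intro s ρ hs hρ
    have hts : ∀ i, (ts i).eval N s ρ ∈ N.dom s := fun i => by
      cases ts i with
      | var j => exact hρ j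
      | const c => exact N.interpC_mem hs c
    simp only [Sat, ← hπ.interpP_iff hs P _ hts, Function.comp_def, hπ.map_eval hs]
  | bot => exact fun _ _ => Iff.rfl
  | and φ ψ ihφ ihψ => exact fun hs hρ => and_congr (ihφ hs hρ) (ihψ hs hρ)
  | or φ ψ ihφ ihψ => exact fun hs hρ => or_congr (ihφ hs hρ) (ihψ hs hρ)
  | imp φ ψ ihφ ihψ =>
    intro s ρ hs hρ
    constructor
    · intro h t hst
      have ht := (N.rel_mem hst).2
      have hρt : ∀ i, N.H s t (ρ i) ∈ N.dom t := fun i => N.H_mem hst (hρ i)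
      rw [← ihφ ht hρt, ← ihψ ht hρt, hπ.map_H_comp hst hρ]
      exact h (f t) (hπ.rel_map hst)
    · intro h v hv
      obtain ⟨t, hst, rfl⟩ := hπ.exists_rel hs hv
      have ht := (N.rel_mem hst).2
      have hρt : ∀ i, N.H s t (ρ i) ∈ N.dom t := fun i => N.H_mem hst (hρ i)
      have hsat := h t hst
      rwa [← ihφ ht hρt, ← ihψ ht hρt, hπ.map_H_comp hst hρ] at hsat
  | all φ ih =>
    intro s ρ hs hρ
    constructor
    · intro h t hst b hb
      have ht := (N.rel_mem hst).2
      rw [← ih ht (Fin.forall_snoc_mem (fun i => N.H_mem hst (hρ i)) hb), Fin.comp_snoc,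
        hπ.map_H_comp hst hρ]
      exact h (f t) (hπ.rel_map hst) (g b) (hπ.mapsTo_dom ht hb)
    · intro h v hv a ha
      obtain ⟨t, hst, rfl⟩ := hπ.exists_rel hs hv
      have ht := (N.rel_mem hst).2
      obtain ⟨b, hb, rfl⟩ := hπ.surjOn_dom ht ha
      have hsat := h t hst b hb
      rwa [← ih ht (Fin.forall_snoc_mem (fun i => N.H_mem hst (hρ i)) hb), Fin.comp_snoc,
        hπ.map_H_comp hst hρ] at hsat
  | ex φ ih =>
    intro s ρ hs hρ
    constructor
    · rintro ⟨a, ha, hsat⟩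
      obtain ⟨b, hb, rfl⟩ := hπ.surjOn_dom hs ha
      rw [← Fin.comp_snoc, ih hs (Fin.forall_snoc_mem hρ hb)] at hsat
      exact ⟨b, hb, hsat⟩
    · rintro ⟨b, hb, hsat⟩
      rw [← ih hs (Fin.forall_snoc_mem hρ hb), Fin.comp_snoc] at hsat
      exact ⟨g b, hπ.mapsTo_dom hs hb, hsat⟩

end IsBoundedMorphism

end KModel

section Unravelling

variable {S : Sig} {W D : Type*} {M : KModel S W D} {w : W}

lemma rel_getLastD_of_mem_unChains (hw : w ∈ M.worlds) {l : List W} (hl : l ∈ unChains M w) :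
    M.rel w (l.getLastD w) := by
  obtain ⟨-, hhd, hch⟩ := hl
  obtain ⟨t, rfl⟩ : ∃ t, l = w :: t := by
    cases l with
    | nil => cases hhd
    | cons x t => exact ⟨t, by simpa using hhd⟩
  exact hch.induction (M.rel w) _ (fun _ _ hxy hwx => M.rel_trans hwx hxy)
    (fun _ => M.rel_refl hw) _ (by rw [List.getLastD_cons]; exact List.getLastD_mem_cons)

lemma unStep.rel_getLastD {s t : List W} (h : unStep M w s t) :
    M.rel (s.getLastD w) (t.getLastD w) := by
  obtain ⟨⟨hs, -⟩, ⟨-, -, hch⟩, u, rfl⟩ := h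
  rw [List.getLastD_concat, List.getLastD_eq_getLast?, List.getLast?_eq_some_getLast hs]
  exact hch.rel_getLast_head_of_append hs (List.cons_ne_nil u [])

lemma unRel.rel_getLastD (hw : w ∈ M.worlds) {s t : List W} (h : unRel M w s t) :
    M.rel (s.getLastD w) (t.getLastD w) :=
  M.rel_of_reflTransGen (M.rel_mem (rel_getLastD_of_mem_unChains hw h.1)).2
    (h.2.2.lift _ fun _ _ => unStep.rel_getLastD)

lemma append_singleton_mem_unChains {l : List W} (hl : l ∈ unChains M w) {v : W}
    (hv : M.rel (l.getLastD w) v) : l ++ [v] ∈ unChains M w := by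
  obtain ⟨hne, hhd, hch⟩ := hl
  refine ⟨by simp, by rwa [List.head?_append_of_ne_nil _ hne], hch.append (.singleton v) ?_⟩
  simp_all [List.getLast?_eq_some_getLast hne]

lemma unRel_append_singleton {l : List W} (hl : l ∈ unChains M w) {v : W}
    (hv : M.rel (l.getLastD w) v) : unRel M w l (l ++ [v]) :=
  have hlv := append_singleton_mem_unChains hl hv
  ⟨hl, hlv, .single ⟨hl, hlv, v, rfl⟩⟩

lemma IsUnravelling.isBoundedMorphism (hw : w ∈ M.worlds) {U : KModel S (List W) (D × List W)}
    (hU : IsUnravelling M w U) : U.IsBoundedMorphism M (·.getLastD w) Prod.fst := by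
  obtain ⟨hW, hR, hD, hP, hC, hH⟩ := hU
  have hdom : ∀ {s}, s ∈ U.worlds → ∀ {p}, p ∈ U.dom s ↔ p.2 = s ∧ p.1 ∈ M.dom (s.getLastD w) :=
    fun hs => by rw [hD _ (hW ▸ hs)]; rfl
  refine
    { rel_map := fun hst => unRel.rel_getLastD hw ((hR _ _).1 hst)
      exists_rel := fun hs hv =>
        ⟨_, (hR _ _).2 (unRel_append_singleton (hW ▸ hs) hv), List.getLastD_concat⟩
      mapsTo_dom := fun hs _ hp => ((hdom hs).1 hp).2
      surjOn_dom := fun hs x hx => ⟨(x, _), (hdom hs).2 ⟨rfl, hx⟩, rfl⟩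
      interpP_iff := @fun s hs P t ht => ?_
      map_interpC := fun hs c => by rw [hC _ (hW ▸ hs)]
      map_H := fun hst x hx => ?_ }
  · have ht' : ∀ i, t i = ((t i).1, s) := fun i => Prod.ext rfl ((hdom hs).1 (ht i)).1
    rw [hP _ (hW ▸ hs)]
    refine ⟨fun h => ⟨_, h, ht'⟩, fun ⟨t₀, ht₀, he⟩ => ?_⟩
    rwa [show Prod.fst ∘ t = t₀ from funext fun i => congrArg Prod.fst (he i)]
  · obtain ⟨x, s⟩ := x
    obtain ⟨rfl, hx⟩ := (hdom (U.rel_mem hst).1).1 hx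
    simp [hH _ _ ((hR _ _).1 hst) x hx]

end Unravelling

/-- Preservation of intuitionistic formulas between a model and its unravelling:
the complete types coincide. -/
theorem unravelling_preserves {S : Sig} {W D : Type*} (M : KModel S W D) (w : W)
    (hw : w ∈ M.worlds) (U : KModel S (List W) (D × List W)) (hU : IsUnravelling M w U)
    (l : List W) (hl : l ∈ unChains M w) {n : ℕ} (a : Fin n → D)
    (ha : ∀ i, a i ∈ M.dom (l.getLastD w)) (φ : Fml S n) :
    Sat M (l.getLastD w) φ a ↔ Sat U l φ (fun i => (a i, l)) := by
  have hlU : l ∈ U.worlds := hU.1 ▸ hl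
  have haU : ∀ i, (a i, l) ∈ U.dom l := fun i => by rw [hU.2.2.1 l hl]; exact ⟨rfl, ha i⟩
  exact (hU.isBoundedMorphism hw).sat_iff φ hlU haU
end

section
/- The Tarski Union Property for intuitionistic first-order logic: if M₁ ⪯ M₂ ⪯ ... ⪯ M_n ⪯ ... is a countable chain of Kripke Θ-models where each M_i is an IL-elementary submodel of M_{i+1}, then each M_i is an IL-elementary submodel of the union M = ⋃_{n} M_n. That is, for all i, all worlds w of M_i, all tuples ā_m in A_w, and fresh constants c̄_m, the complete IL-types agree: Tp(M_i, w, c̄_m/ā_m) = Tp(M, w, c̄_m/ā_m). -/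
set_option linter.unusedVariables false

universe u

variable {S T : Sig} {W D : Type*}

/-! The union `U` of an elementary chain agrees with each `Mₖ` on every formula, by induction
on formulas. The only non-trivial cases are the three quantifier-like connectives `→`, `∀`, `∃`,
whose witnesses in `U` (a later world, an element of some domain) already live in some `Mⱼ`
with `j ≥ k`; there `Mₖ ⪯ Mⱼ` transfers the formula between `Mₖ` and `Mⱼ`, and the induction
hypothesis at `Mⱼ` transfers its subformulas between `Mⱼ` and `U`. -/

theorem forall_snoc_mem {n : ℕ} {s : Set D} {a : Fin n → D} {b : D} (ha : ∀ i, a i ∈ s)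
    (hb : b ∈ s) (i : Fin (n + 1)) : (Fin.snoc a b : Fin (n + 1) → D) i ∈ s :=
  Fin.lastCases (by simpa using hb) (fun i => by simpa using ha i) i

section Elementary

variable {W' D' : Type*}

theorem tp_eq_iff {M : KModel S W D} {N : KModel S W' D'} {w : W} {w' : W'} {n : ℕ}
    {a : Fin n → D} {b : Fin n → D'} :
    Tp M w a = Tp N w' b ↔ ∀ φ : Fml S n, Sat M w φ a ↔ Sat N w' φ b := by
  simp only [Tp, Prod.ext_iff, Set.ext_iff]
  exact ⟨fun h => h.1, fun h => ⟨h, fun φ => not_congr (h φ)⟩⟩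

theorem Submodel.refl (M : KModel S W D) : Submodel M M :=
  ⟨subset_rfl, fun _ _ => ⟨fun h => ⟨h, M.rel_mem h⟩, And.left⟩, fun _ _ => subset_rfl,
    fun _ _ _ _ _ => Iff.rfl, fun _ _ _ => rfl, fun _ _ _ _ _ => rfl⟩

theorem Submodel.trans {M N P : KModel S W D} (hMN : Submodel M N) (hNP : Submodel N P) :
    Submodel M P := by
  obtain ⟨hW₁, hR₁, hD₁, hP₁, hC₁, hH₁⟩ := hMN
  obtain ⟨hW₂, hR₂, hD₂, hP₂, hC₂, hH₂⟩ := hNP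
  refine ⟨hW₁.trans hW₂, fun a b => ?_, fun w hw => (hD₁ w hw).trans (hD₂ w (hW₁ hw)),
    fun w hw P t ht => (hP₁ w hw P t ht).trans (hP₂ w (hW₁ hw) P t fun i => hD₁ w hw (ht i)),
    fun w hw c => (hC₁ w hw c).trans (hC₂ w (hW₁ hw) c), fun a b hab x hx => ?_⟩
  · rw [hR₁, hR₂]
    exact ⟨fun ⟨⟨h, _⟩, ha, hb⟩ => ⟨h, ha, hb⟩, fun ⟨h, ha, hb⟩ => ⟨⟨h, hW₁ ha, hW₁ hb⟩, ha, hb⟩⟩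
  · obtain ⟨hab', ha, _⟩ := (hR₁ a b).1 hab
    exact (hH₁ a b hab x hx).trans (hH₂ a b hab' x (hD₁ a ha hx))

theorem ElemSub.refl (M : KModel S W D) : ElemSub M M :=
  ⟨Submodel.refl M, fun _ _ _ _ _ => rfl⟩

theorem ElemSub.trans {M N P : KModel S W D} (hMN : ElemSub M N) (hNP : ElemSub N P) :
    ElemSub M P :=
  ⟨hMN.1.trans hNP.1, fun w hw n a ha =>
    (hMN.2 w hw n a ha).trans (hNP.2 w (hMN.1.1 hw) n a fun i => hMN.1.2.2.1 w hw (ha i))⟩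

theorem ElemSub.sat_iff {M N : KModel S W D} (h : ElemSub M N) {w : W} (hw : w ∈ M.worlds)
    {n : ℕ} {a : Fin n → D} (ha : ∀ i, a i ∈ M.dom w) (φ : Fml S n) :
    Sat M w φ a ↔ Sat N w φ a :=
  tp_eq_iff.1 (h.2 w hw n a ha) φ

theorem Submodel.sat_atom_iff {M N : KModel S W D} (h : Submodel M N) {w : W}
    (hw : w ∈ M.worlds) {n : ℕ} {a : Fin n → D} (ha : ∀ i, a i ∈ M.dom w) (P : S.Pred)
    (ts : Fin (S.arity P) → Term S n) :
    Sat M w (.atom P ts) a ↔ Sat N w (.atom P ts) a := by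
  have heval : ∀ t : Term S n, Term.eval N w a t = Term.eval M w a t
    | .var _ => rfl
    | .const c => (h.2.2.2.2.1 w hw c).symm
  have hmem : ∀ t : Term S n, Term.eval M w a t ∈ M.dom w
    | .var i => ha i
    | .const c => M.interpC_mem hw c
  simp only [Sat, heval]
  exact h.2.2.2.1 w hw P _ fun i => hmem (ts i)

end Elementary

theorem elemSub_of_le {Ms : ℕ → KModel S W D} (hchain : ∀ k, ElemSub (Ms k) (Ms (k + 1)))
    {k j : ℕ} (hkj : k ≤ j) : ElemSub (Ms k) (Ms j) := by
  induction j, hkj using Nat.le_induction with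
  | base => exact ElemSub.refl _
  | succ j _ ih => exact ih.trans (hchain j)

namespace IsChainUnion

variable {Ms : ℕ → KModel S W D} {U : KModel S W D} {k : ℕ} {a b w : W} {x : D}

theorem mem_worlds (hU : IsChainUnion Ms U) (hw : w ∈ (Ms k).worlds) : w ∈ U.worlds :=
  hU.1 ▸ Set.mem_iUnion.2 ⟨k, hw⟩

theorem mem_dom (hU : IsChainUnion Ms U) (hw : w ∈ (Ms k).worlds) (hx : x ∈ (Ms k).dom w) :
    x ∈ U.dom w := by
  rw [hU.2.2.1 w (hU.mem_worlds hw)]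
  exact ⟨k, hw, hx⟩

theorem rel (hU : IsChainUnion Ms U) (h : (Ms k).rel a b) : U.rel a b :=
  (hU.2.1 a b).2 ⟨k, h⟩

theorem H_eq (hU : IsChainUnion Ms U) (h : (Ms k).rel a b) (hx : x ∈ (Ms k).dom a) :
    U.H a b x = (Ms k).H a b x :=
  hU.2.2.2.2.2 a b k h x hx

theorem eventually_rel (hU : IsChainUnion Ms U)
    (hmono : ∀ {k j}, k ≤ j → Submodel (Ms k) (Ms j)) (h : U.rel a b) :
    ∀ᶠ j in Filter.atTop, (Ms j).rel a b := by
  obtain ⟨k, hk⟩ := (hU.2.1 a b).1 h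
  exact Filter.eventually_atTop.2 ⟨k, fun j hj => (((hmono hj).2.1 a b).1 hk).1⟩

theorem eventually_mem_dom (hU : IsChainUnion Ms U)
    (hmono : ∀ {k j}, k ≤ j → Submodel (Ms k) (Ms j)) (hw : w ∈ U.worlds) (hx : x ∈ U.dom w) :
    ∀ᶠ j in Filter.atTop, w ∈ (Ms j).worlds ∧ x ∈ (Ms j).dom w := by
  rw [hU.2.2.1 w hw] at hx
  obtain ⟨k, hwk, hxk⟩ := hx
  exact Filter.eventually_atTop.2 ⟨k, fun j hj => ⟨(hmono hj).1 hwk, (hmono hj).2.2.1 w hwk hxk⟩⟩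

theorem submodel (hU : IsChainUnion Ms U) (hmono : ∀ {k j}, k ≤ j → Submodel (Ms k) (Ms j))
    (k : ℕ) : Submodel (Ms k) U := by
  refine ⟨fun w => hU.mem_worlds, fun a b => ⟨fun h => ⟨hU.rel h, (Ms k).rel_mem h⟩, ?_⟩,
    fun w hw x => hU.mem_dom hw, fun w hw P t ht => ?_, fun w hw c => (hU.2.2.2.2.1 w k hw c).symm,
    fun a b h x hx => (hU.H_eq h hx).symm⟩
  · rintro ⟨h, ha, hb⟩
    obtain ⟨j, hj, hkj⟩ := ((hU.eventually_rel hmono h).and (Filter.eventually_ge_atTop k)).exists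
    exact ((hmono hkj).2.1 a b).2 ⟨hj, ha, hb⟩
  · rw [hU.2.2.2.1 w (hU.mem_worlds hw) P t fun i => hU.mem_dom hw (ht i)]
    refine ⟨fun h => ⟨k, hw, ht, h⟩, fun ⟨j, hwj, htj, hj⟩ => ?_⟩
    exact ((hmono (le_max_left k j)).2.2.2.1 w hw P t ht).2
      (((hmono (le_max_right k j)).2.2.2.1 w hwj P t htj).1 hj)

def IsAbsolute (Ms : ℕ → KModel S W D) (U : KModel S W D) {n : ℕ} (φ : Fml S n) : Prop :=
  ∀ k w (a : Fin n → D), w ∈ (Ms k).worlds → (∀ i, a i ∈ (Ms k).dom w) →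
    (Sat (Ms k) w φ a ↔ Sat U w φ a)

variable {n : ℕ} {φ ψ : Fml S n}

theorem isAbsolute_atom (hU : IsChainUnion Ms U)
    (hmono : ∀ {k j}, k ≤ j → Submodel (Ms k) (Ms j)) (P : S.Pred)
    (ts : Fin (S.arity P) → Term S n) : IsAbsolute Ms U (.atom P ts) :=
  fun k _ _ hw ha => (hU.submodel hmono k).sat_atom_iff hw ha P ts

theorem isAbsolute_imp (hU : IsChainUnion Ms U) (hchain : ∀ k, ElemSub (Ms k) (Ms (k + 1)))
    (hφ : IsAbsolute Ms U φ) (hψ : IsAbsolute Ms U ψ) : IsAbsolute Ms U (.imp φ ψ) := by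
  intro k w a hw ha
  constructor
  · intro h v hv
    obtain ⟨j, hj, hkj⟩ := ((hU.eventually_rel (fun h => (elemSub_of_le hchain h).1) hv).and
      (Filter.eventually_ge_atTop k)).exists
    have hsat := ((elemSub_of_le hchain hkj).sat_iff hw ha (.imp φ ψ)).1 h
    have haj : ∀ i, a i ∈ (Ms j).dom w := fun i => (elemSub_of_le hchain hkj).1.2.2.1 w hw (ha i)
    have hb : ∀ i, (Ms j).H w v (a i) ∈ (Ms j).dom v := fun i => (Ms j).H_mem hj (haj i)
    have hvj := ((Ms j).rel_mem hj).2
    simp only [hU.H_eq hj (haj _)]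
    exact fun hφv => (hψ j v _ hvj hb).1 (hsat v hj ((hφ j v _ hvj hb).2 hφv))
  · intro h v hv hφv
    have hb : ∀ i, (Ms k).H w v (a i) ∈ (Ms k).dom v := fun i => (Ms k).H_mem hv (ha i)
    have hvk := ((Ms k).rel_mem hv).2
    have hUv := h v (hU.rel hv)
    simp only [hU.H_eq hv (ha _)] at hUv
    exact (hψ k v _ hvk hb).2 (hUv ((hφ k v _ hvk hb).1 hφv))

theorem isAbsolute_all (hU : IsChainUnion Ms U) (hchain : ∀ k, ElemSub (Ms k) (Ms (k + 1)))
    {φ : Fml S (n + 1)} (hφ : IsAbsolute Ms U φ) : IsAbsolute Ms U (.all φ) := by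
  intro k w a hw ha
  constructor
  · intro h v hv b hb
    obtain ⟨j, hj, ⟨-, hbj⟩, hkj⟩ :=
      ((hU.eventually_rel (fun h => (elemSub_of_le hchain h).1) hv).and
        ((hU.eventually_mem_dom (fun h => (elemSub_of_le hchain h).1) (U.rel_mem hv).2 hb).and
          (Filter.eventually_ge_atTop k))).exists
    have hsat := ((elemSub_of_le hchain hkj).sat_iff hw ha (.all φ)).1 h
    have haj : ∀ i, a i ∈ (Ms j).dom w := fun i => (elemSub_of_le hchain hkj).1.2.2.1 w hw (ha i)
    have hb' := forall_snoc_mem (fun i => (Ms j).H_mem hj (haj i)) hbj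
    simp only [hU.H_eq hj (haj _)]
    exact (hφ j v _ ((Ms j).rel_mem hj).2 hb').1 (hsat v hj b hbj)
  · intro h v hv b hb
    have hvk := ((Ms k).rel_mem hv).2
    have hUv := h v (hU.rel hv) b (hU.mem_dom hvk hb)
    simp only [hU.H_eq hv (ha _)] at hUv
    exact (hφ k v _ hvk (forall_snoc_mem (fun i => (Ms k).H_mem hv (ha i)) hb)).2 hUv

theorem isAbsolute_ex (hU : IsChainUnion Ms U) (hchain : ∀ k, ElemSub (Ms k) (Ms (k + 1)))
    {φ : Fml S (n + 1)} (hφ : IsAbsolute Ms U φ) : IsAbsolute Ms U (.ex φ) := by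
  intro k w a hw ha
  constructor
  · rintro ⟨b, hb, hsat⟩
    exact ⟨b, hU.mem_dom hw hb, (hφ k w _ hw (forall_snoc_mem ha hb)).1 hsat⟩
  · rintro ⟨b, hb, hsat⟩
    obtain ⟨j, ⟨hwj, hbj⟩, hkj⟩ :=
      ((hU.eventually_mem_dom (fun h => (elemSub_of_le hchain h).1) (hU.mem_worlds hw) hb).and
        (Filter.eventually_ge_atTop k)).exists
    have haj : ∀ i, a i ∈ (Ms j).dom w := fun i => (elemSub_of_le hchain hkj).1.2.2.1 w hw (ha i)
    exact ((elemSub_of_le hchain hkj).sat_iff hw ha (.ex φ)).2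
      ⟨b, hbj, (hφ j w _ hwj (forall_snoc_mem haj hbj)).2 hsat⟩

theorem isAbsolute (hU : IsChainUnion Ms U) (hchain : ∀ k, ElemSub (Ms k) (Ms (k + 1))) :
    ∀ {n : ℕ} (φ : Fml S n), IsAbsolute Ms U φ
  | _, .atom P ts => isAbsolute_atom hU (fun h => (elemSub_of_le hchain h).1) P ts
  | _, .bot => fun _ _ _ _ _ => Iff.rfl
  | _, .and φ ψ => fun k w a hw ha =>
    and_congr (isAbsolute hU hchain φ k w a hw ha) (isAbsolute hU hchain ψ k w a hw ha)
  | _, .or φ ψ => fun k w a hw ha =>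
    or_congr (isAbsolute hU hchain φ k w a hw ha) (isAbsolute hU hchain ψ k w a hw ha)
  | _, .imp φ ψ => isAbsolute_imp hU hchain (isAbsolute hU hchain φ) (isAbsolute hU hchain ψ)
  | _, .all φ => isAbsolute_all hU hchain (isAbsolute hU hchain φ)
  | _, .ex φ => isAbsolute_ex hU hchain (isAbsolute hU hchain φ)

end IsChainUnion

/-- The Tarski Union Property: each member of a countable IL-elementary chain is an
IL-elementary submodel of the union of the chain. -/
theorem tarski_union {S : Sig} {W D : Type*} (Ms : ℕ → KModel S W D)
    (hchain : ∀ k, ElemSub (Ms k) (Ms (k + 1)))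
    (U : KModel S W D) (hU : IsChainUnion Ms U) :
    ∀ k, ElemSub (Ms k) U := fun k =>
  ⟨hU.submodel (fun h => (elemSub_of_le hchain h).1) k, fun w hw _ a ha =>
    tp_eq_iff.2 fun φ => hU.isAbsolute hchain φ k w a hw ha⟩
end
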